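/- (Even reflection of a C² function with vanishing normal derivative.) Let H = {x ∈ ℝⁿ : xₙ ≥ 0} be the closed half-space. Let f : H → ℝ be such that f and all its partial derivatives up to order two exist and are continuous on H (one-sided at the boundary), and assume ∂f/∂xₙ(x) = 0 at every boundary point x with xₙ = 0. Define the even reflection f̃ : ℝⁿ → ℝ by f̃(x) = f(x) for xₙ ≥ 0 and f̃(x₁,…,xₙ) = f(x₁,…,x_{n−1},−xₙ) for xₙ < 0. Then f̃ is twice continuously differentiable on all of ℝⁿ. Moreover, if in addition the second-order partial derivatives of f are α-Hölder continuous on H for some 0 < α < 1, then the second-order partial derivatives of f̃ are locally α-Hölder continuous on ℝⁿ. -/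

import Mathlib

/-!
Write `ρ` for the reflection across the hyperplane `⟪x, e⟫ = 0` and `H` for the half-space
`⟪x, e⟫ ≥ 0`. On the lower half-space `f̃ = f ∘ ρ`, so `Df̃ x = Df (ρ x) ∘ ρ` and
`D²f̃ x = D²f (ρ x) (ρ ·) (ρ ·)` there, while on `H` the derivatives of `f̃` are those of
`f`. The two one-sided expressions agree on the hyperplane, which is all that gluing needs:
for `Df` because `Df x e = 0` there, and for `D²f` because differentiating the Neumann
condition along the hyperplane gives `D²f x u e = 0` for `u ⊥ e`, which together with the
symmetry of `D²f` makes `D²f x` invariant under `ρ`.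

For the Hölder bound, a mixed second partial `∂ᵢ∂ₙ` changes sign under the reflection but
vanishes on the hyperplane, so for `y, z` on opposite sides one compares both values with the
value `0` at the nearest boundary points; the other partials are simply reflected, and `ρ` does
not increase the distance between points on opposite sides.
-/

open Metric Set

noncomputable section

/-- Negation of the `i`-th coordinate of a point of `ℝⁿ`. -/
def negC {n : ℕ} (i : Fin n) (x : EuclideanSpace ℝ (Fin n)) : EuclideanSpace ℝ (Fin n) :=
  WithLp.toLp 2 (fun j => if j = i then -(x j) else x j)

/-- The closed half-space `H = {x ∈ ℝⁿ : 0 ≤ xₙ}`, `iN` being the index of `xₙ`. -/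
def halfSp {n : ℕ} (iN : Fin n) : Set (EuclideanSpace ℝ (Fin n)) := {x | 0 ≤ x iN}

/-- The even reflection of `f` across the hyperplane `{xₙ = 0}`. -/
def evenRefl {n : ℕ} (iN : Fin n) (f : EuclideanSpace ℝ (Fin n) → ℝ)
    (x : EuclideanSpace ℝ (Fin n)) : ℝ :=
  if 0 ≤ x iN then f x else f (negC iN x)

/-- The second-order partial derivative `∂²g/∂xᵢ∂xⱼ`, with derivatives taken within `s`. -/
def secondPartialW {n : ℕ} (g : EuclideanSpace ℝ (Fin n) → ℝ)
    (s : Set (EuclideanSpace ℝ (Fin n))) (i j : Fin n) (x : EuclideanSpace ℝ (Fin n)) : ℝ :=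
  fderivWithin ℝ (fun z => fderivWithin ℝ g s z (EuclideanSpace.single i 1)) s x
    (EuclideanSpace.single j 1)

/-- The second-order partial derivative `∂²g/∂xᵢ∂xⱼ` (full-space derivatives). -/
def secondPartial {n : ℕ} (g : EuclideanSpace ℝ (Fin n) → ℝ) (i j : Fin n)
    (x : EuclideanSpace ℝ (Fin n)) : ℝ :=
  fderiv ℝ (fun z => fderiv ℝ g z (EuclideanSpace.single i 1)) x (EuclideanSpace.single j 1)

open scoped RealInnerProductSpace

theorem hasFDerivAt_of_isClosed_union_eq_univ {E F : Type*} [NormedAddCommGroup E]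
    [NormedSpace ℝ E] [NormedAddCommGroup F] [NormedSpace ℝ F] {s t : Set E} {u : E → F}
    {u' : E → E →L[ℝ] F} (hs : IsClosed s) (ht : IsClosed t) (hst : s ∪ t = univ)
    (hus : ∀ x ∈ s, HasFDerivWithinAt u (u' x) s x)
    (hut : ∀ x ∈ t, HasFDerivWithinAt u (u' x) t x) (x : E) : HasFDerivAt u (u' x) x := by
  have within {r : Set E} (hr : IsClosed r) (hur : ∀ x ∈ r, HasFDerivWithinAt u (u' x) r x) :
      HasFDerivWithinAt u (u' x) r x := by
    by_cases hx : x ∈ r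
    · exact hur x hx
    · exact .of_notMem_closure (by rwa [hr.closure_eq])
  simpa [hst] using (within hs hus).union (within ht hut)

section Reflection

variable {E : Type*} [NormedAddCommGroup E] [InnerProductSpace ℝ E] (e : E)

local notation "ρ" => Submodule.reflection (ℝ ∙ e)ᗮ

def upperHalfSpace : Set E := {x | 0 ≤ ⟪x, e⟫}

def lowerHalfSpace : Set E := {x | ⟪x, e⟫ ≤ 0}

local notation "𝓗" => upperHalfSpace e

variable {e} in
theorem mem_upperHalfSpace {x : E} : x ∈ upperHalfSpace e ↔ 0 ≤ ⟪x, e⟫ := Iff.rfl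

variable {e} in
theorem mem_lowerHalfSpace {x : E} : x ∈ lowerHalfSpace e ↔ ⟪x, e⟫ ≤ 0 := Iff.rfl

theorem isClosed_upperHalfSpace : IsClosed 𝓗 :=
  isClosed_le continuous_const (by fun_prop)

theorem isClosed_lowerHalfSpace : IsClosed (lowerHalfSpace e) :=
  isClosed_le (by fun_prop) continuous_const

theorem upperHalfSpace_union_lowerHalfSpace : 𝓗 ∪ lowerHalfSpace e = univ :=
  eq_univ_of_forall fun x => le_total 0 ⟪x, e⟫

theorem convex_upperHalfSpace : Convex ℝ 𝓗 :=
  convex_halfSpace_ge (innerₛₗ ℝ |>.flip e).isLinear 0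

theorem upperHalfSpace_mem_nhds {x : E} (hx : 0 < ⟪x, e⟫) : 𝓗 ∈ nhds x :=
  Filter.mem_of_superset
    ((isOpen_lt continuous_const (by fun_prop : Continuous (⟪·, e⟫))).mem_nhds hx)
    fun _ h => mem_upperHalfSpace.2 (le_of_lt h)

theorem self_mem_interior_upperHalfSpace {e : E} (he : e ≠ 0) :
    e ∈ interior (upperHalfSpace e) :=
  mem_interior_iff_mem_nhds.2 <| upperHalfSpace_mem_nhds e <| real_inner_self_pos.2 he

theorem uniqueDiffOn_upperHalfSpace : UniqueDiffOn ℝ 𝓗 := by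
  rcases eq_or_ne e 0 with rfl | he
  · simp [upperHalfSpace, uniqueDiffOn_univ]
  · exact uniqueDiffOn_convex (convex_upperHalfSpace e)
      ⟨e, self_mem_interior_upperHalfSpace he⟩

theorem upperHalfSpace_subset_closure_interior : 𝓗 ⊆ closure (interior 𝓗) := by
  rcases eq_or_ne e 0 with rfl | he
  · simp [upperHalfSpace]
  · rw [(convex_upperHalfSpace e).closure_interior_eq_closure_of_nonempty_interior
      ⟨e, self_mem_interior_upperHalfSpace he⟩]
    exact subset_closure

variable {e}

theorem reflection_orthogonal_singleton_apply (v : E) :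
    ρ v = v - (2 * (⟪e, v⟫ / ‖e‖ ^ 2)) • e := by
  rw [Submodule.reflection_orthogonal_apply, Submodule.reflection_singleton_apply]
  simp only [RCLike.ofReal_real_eq_id, id, neg_sub]
  module

theorem inner_reflection_orthogonal_singleton (x : E) : ⟪ρ x, e⟫ = -⟪x, e⟫ := by
  calc ⟪ρ x, e⟫ = ⟪ρ x, ρ (-e)⟫ := by
        rw [map_neg, Submodule.reflection_orthogonalComplement_singleton_eq_neg, neg_neg]
    _ = -⟪x, e⟫ := by rw [LinearIsometryEquiv.inner_map_map, inner_neg_right]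

theorem reflection_orthogonal_singleton_eq_self {x : E} (hx : ⟪x, e⟫ = 0) : ρ x = x :=
  Submodule.reflection_mem_subspace_eq_self
    (Submodule.mem_orthogonal_singleton_iff_inner_left.2 hx)

theorem mapsTo_reflection_lowerHalfSpace : MapsTo ρ (lowerHalfSpace e) 𝓗 := fun x hx => by
  rw [mem_upperHalfSpace, inner_reflection_orthogonal_singleton]
  linarith [mem_lowerHalfSpace.1 hx]

variable {F : Type*} [NormedAddCommGroup F] [NormedSpace ℝ F]

theorem ContinuousLinearMap.apply_reflection_orthogonal_singleton {A : E →L[ℝ] F}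
    (hA : A e = 0) (v : E) : A (ρ v) = A v := by
  simp [reflection_orthogonal_singleton_apply, hA]

theorem ContinuousLinearMap.apply_reflection_apply_reflection {B : E →L[ℝ] E →L[ℝ] F}
    (hsymm : ∀ v w, B v w = B w v) (htan : ∀ u, ⟪u, e⟫ = 0 → B u e = 0) (v w : E) :
    B (ρ v) (ρ w) = B v w := by
  have hBe (u : E) : B u e = (⟪e, u⟫ / ‖e‖ ^ 2) • B e e := by
    have hperp : ⟪u - (⟪e, u⟫ / ‖e‖ ^ 2) • e, e⟫ = 0 := by
      rcases eq_or_ne e 0 with rfl | he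
      · simp
      · rw [inner_sub_left, real_inner_smul_left, real_inner_self_eq_norm_sq, real_inner_comm]
        field_simp
        ring
    simpa [sub_eq_zero] using htan _ hperp
  rw [reflection_orthogonal_singleton_apply, reflection_orthogonal_singleton_apply]
  simp only [map_sub, map_smul, sub_apply, smul_apply]
  rw [hsymm e w, hBe v, hBe w]
  module

section Extension

variable (e) {G : Type*} [NormedAddCommGroup G] [NormedSpace ℝ G] (T : G →L[ℝ] G)

/-- `T` says how a value of `g` transforms under the reflection: the identity for `g = f`, and
`A ↦ A ∘ ρ`, `B ↦ B (ρ ·) (ρ ·)` for the first and second derivatives of `f`. -/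
def reflectionExtension (g : E → G) (x : E) : G :=
  if 0 ≤ ⟪x, e⟫ then g x else T (g (ρ x))

def reflectionLift : (E →L[ℝ] G) →L[ℝ] E →L[ℝ] G :=
  (ContinuousLinearMap.compL ℝ E G G T).comp
    ((ContinuousLinearMap.compL ℝ E E G).flip (ρ : E →L[ℝ] E))

theorem reflectionLift_apply (A : E →L[ℝ] G) (v : E) :
    reflectionLift e T A v = T (A (ρ v)) := rfl

variable {e T} {g : E → G}

theorem reflectionExtension_eqOn_upperHalfSpace : EqOn (reflectionExtension e T g) g 𝓗 :=
  fun _ hx => if_pos hx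

theorem reflectionExtension_eqOn_lowerHalfSpace (hT : ∀ x, ⟪x, e⟫ = 0 → T (g x) = g x) :
    EqOn (reflectionExtension e T g) (fun x => T (g (ρ x))) (lowerHalfSpace e) := by
  intro x hx
  rcases (mem_lowerHalfSpace.1 hx).lt_or_eq with hx | hx
  · exact if_neg hx.not_ge
  · dsimp only
    rw [reflectionExtension, if_pos hx.ge, reflection_orthogonal_singleton_eq_self hx, hT x hx]

theorem continuous_reflectionExtension (hg : ContinuousOn g 𝓗)
    (hT : ∀ x, ⟪x, e⟫ = 0 → T (g x) = g x) : Continuous (reflectionExtension e T g) := by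
  rw [← continuousOn_univ, ← upperHalfSpace_union_lowerHalfSpace e]
  refine .union_of_isClosed ?_ ?_ (isClosed_upperHalfSpace e) (isClosed_lowerHalfSpace e)
  · exact hg.congr reflectionExtension_eqOn_upperHalfSpace
  · refine ContinuousOn.congr ?_ (reflectionExtension_eqOn_lowerHalfSpace hT)
    exact T.continuous.comp_continuousOn <|
      hg.comp (ρ).continuous.continuousOn mapsTo_reflection_lowerHalfSpace

theorem hasFDerivAt_reflectionExtension {g' : E → E →L[ℝ] G}
    (hg : ∀ x ∈ 𝓗, HasFDerivWithinAt g (g' x) 𝓗 x)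
    (hT : ∀ x, ⟪x, e⟫ = 0 → T (g x) = g x)
    (hT' : ∀ x, ⟪x, e⟫ = 0 → reflectionLift e T (g' x) = g' x) (x : E) :
    HasFDerivAt (reflectionExtension e T g)
      (reflectionExtension e (reflectionLift e T) g' x) x := by
  refine hasFDerivAt_of_isClosed_union_eq_univ (isClosed_upperHalfSpace e)
    (isClosed_lowerHalfSpace e) (upperHalfSpace_union_lowerHalfSpace e)
    (fun x hx => ?_) (fun x hx => ?_) x
  · rw [reflectionExtension_eqOn_upperHalfSpace hx]
    exact (hg x hx).congr reflectionExtension_eqOn_upperHalfSpace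
      (reflectionExtension_eqOn_upperHalfSpace hx)
  · rw [reflectionExtension_eqOn_lowerHalfSpace hT' hx]
    have hρ := (ρ : E →L[ℝ] E).hasFDerivAt (x := x)
    exact (T.hasFDerivAt.comp_hasFDerivWithinAt x <|
      (hg _ (mapsTo_reflection_lowerHalfSpace hx)).comp x hρ.hasFDerivWithinAt
        mapsTo_reflection_lowerHalfSpace).congr
      (reflectionExtension_eqOn_lowerHalfSpace hT) (reflectionExtension_eqOn_lowerHalfSpace hT hx)

end Extension

section EvenReflection

variable {f : E → F} (hf : ContDiffOn ℝ 2 f (upperHalfSpace e))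
  (hneu : ∀ x, ⟪x, e⟫ = 0 → fderivWithin ℝ f (upperHalfSpace e) x e = 0)

include hf in
theorem contDiffOn_fderivWithin_upperHalfSpace : ContDiffOn ℝ 1 (fderivWithin ℝ f 𝓗) 𝓗 :=
  hf.fderivWithin (uniqueDiffOn_upperHalfSpace e) le_rfl

include hf in
theorem isSymmSndFDerivWithinAt_upperHalfSpace {x : E} (hx : x ∈ 𝓗) :
    IsSymmSndFDerivWithinAt ℝ f 𝓗 x :=
  (hf x hx).isSymmSndFDerivWithinAt (by simp) (uniqueDiffOn_upperHalfSpace e)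
    (upperHalfSpace_subset_closure_interior e hx) hx

include hneu in
theorem reflectionLift_fderivWithin (x : E) (hx : ⟪x, e⟫ = 0) :
    reflectionLift e (.id ℝ F) (fderivWithin ℝ f 𝓗 x) = fderivWithin ℝ f 𝓗 x :=
  ContinuousLinearMap.ext <| ContinuousLinearMap.apply_reflection_orthogonal_singleton (hneu x hx)

include hf hneu

theorem fderivWithin_fderivWithin_apply_self_eq_zero {x u : E} (hx : ⟪x, e⟫ = 0)
    (hu : ⟪u, e⟫ = 0) : fderivWithin ℝ (fderivWithin ℝ f 𝓗) 𝓗 x u e = 0 := by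
  set Df := fderivWithin ℝ f 𝓗
  have hDf : HasFDerivWithinAt Df (fderivWithin ℝ Df 𝓗 x) 𝓗 x :=
    ((contDiffOn_fderivWithin_upperHalfSpace hf).differentiableOn one_ne_zero x
      (mem_upperHalfSpace.2 hx.ge)).hasFDerivWithinAt
  have hline_mem (t : ℝ) : ⟪x + t • u, e⟫ = 0 := by
    simp [inner_add_left, real_inner_smul_left, hx, hu]
  -- `t ↦ Df (x + t • u) e` vanishes identically, and its derivative at `0` is the claimed value
  have hderiv :
      HasDerivAt (fun t : ℝ => Df (x + t • u) e) (fderivWithin ℝ Df 𝓗 x u e) 0 := by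
    have hc : HasDerivAt (fun t : ℝ => x + t • u) u 0 := by
      simpa using ((hasDerivAt_id (0 : ℝ)).smul_const u).const_add x
    exact ((ContinuousLinearMap.apply ℝ F e).hasFDerivAt.comp_hasFDerivWithinAt x hDf
      ).comp_hasDerivAt_of_eq 0 hc
      (.of_forall fun t => mem_upperHalfSpace.2 (hline_mem t).ge) (by simp)
  have hzero : (fun t : ℝ => Df (x + t • u) e) = fun _ => 0 :=
    funext fun t => hneu _ (hline_mem t)
  rw [hzero] at hderiv
  exact hderiv.unique (hasDerivAt_const 0 0)

theorem fderivWithin_fderivWithin_self_apply_eq_zero {x u : E} (hx : ⟪x, e⟫ = 0)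
    (hu : ⟪u, e⟫ = 0) : fderivWithin ℝ (fderivWithin ℝ f 𝓗) 𝓗 x e u = 0 := by
  rw [isSymmSndFDerivWithinAt_upperHalfSpace hf (mem_upperHalfSpace.2 hx.ge)]
  exact fderivWithin_fderivWithin_apply_self_eq_zero hf hneu hx hu

theorem reflectionLift_reflectionLift_fderivWithin_fderivWithin (x : E) (hx : ⟪x, e⟫ = 0) :
    reflectionLift e (reflectionLift e (.id ℝ F))
        (fderivWithin ℝ (fderivWithin ℝ f 𝓗) 𝓗 x) =
      fderivWithin ℝ (fderivWithin ℝ f 𝓗) 𝓗 x := by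
  ext v w
  exact ContinuousLinearMap.apply_reflection_apply_reflection
    (isSymmSndFDerivWithinAt_upperHalfSpace hf (mem_upperHalfSpace.2 hx.ge))
    (fun u hu => fderivWithin_fderivWithin_apply_self_eq_zero hf hneu hx hu) v w

theorem hasFDerivAt_reflectionExtension_id (x : E) :
    HasFDerivAt (reflectionExtension e (.id ℝ F) f)
      (reflectionExtension e (reflectionLift e (.id ℝ F)) (fderivWithin ℝ f 𝓗) x) x :=
  hasFDerivAt_reflectionExtension
    (fun x hx => (hf.differentiableOn two_ne_zero x hx).hasFDerivWithinAt)
    (fun _ _ => rfl) (reflectionLift_fderivWithin hneu) x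

theorem hasFDerivAt_reflectionExtension_fderivWithin (x : E) :
    HasFDerivAt (reflectionExtension e (reflectionLift e (.id ℝ F)) (fderivWithin ℝ f 𝓗))
      (reflectionExtension e (reflectionLift e (reflectionLift e (.id ℝ F)))
        (fderivWithin ℝ (fderivWithin ℝ f 𝓗) 𝓗) x) x :=
  hasFDerivAt_reflectionExtension
    (fun x hx => ((contDiffOn_fderivWithin_upperHalfSpace hf).differentiableOn one_ne_zero x
      hx).hasFDerivWithinAt)
    (reflectionLift_fderivWithin hneu)
    (reflectionLift_reflectionLift_fderivWithin_fderivWithin hf hneu) x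

theorem fderiv_reflectionExtension_id :
    fderiv ℝ (reflectionExtension e (.id ℝ F) f) =
      reflectionExtension e (reflectionLift e (.id ℝ F)) (fderivWithin ℝ f 𝓗) :=
  funext fun x => (hasFDerivAt_reflectionExtension_id hf hneu x).fderiv

theorem fderiv_fderiv_reflectionExtension_id :
    fderiv ℝ (fderiv ℝ (reflectionExtension e (.id ℝ F) f)) =
      reflectionExtension e (reflectionLift e (reflectionLift e (.id ℝ F)))
        (fderivWithin ℝ (fderivWithin ℝ f 𝓗) 𝓗) := by
  rw [fderiv_reflectionExtension_id hf hneu]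
  exact funext fun x => (hasFDerivAt_reflectionExtension_fderivWithin hf hneu x).fderiv

theorem contDiff_reflectionExtension_id : ContDiff ℝ 2 (reflectionExtension e (.id ℝ F) f) := by
  rw [show (2 : WithTop ℕ∞) = 1 + 1 from rfl, contDiff_succ_iff_fderiv, contDiff_one_iff_fderiv,
    fderiv_fderiv_reflectionExtension_id hf hneu, fderiv_reflectionExtension_id hf hneu]
  refine ⟨fun x => (hasFDerivAt_reflectionExtension_id hf hneu x).differentiableAt, by simp,
    fun x => (hasFDerivAt_reflectionExtension_fderivWithin hf hneu x).differentiableAt,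
    continuous_reflectionExtension ?_
      (reflectionLift_reflectionLift_fderivWithin_fderivWithin hf hneu)⟩
  exact (contDiffOn_fderivWithin_upperHalfSpace hf).continuousOn_fderivWithin
    (uniqueDiffOn_upperHalfSpace e) le_rfl

end EvenReflection

section Holder

variable (he : ‖e‖ = 1)
include he

theorem exists_inner_eq_zero_norm_sub_eq (y : E) :
    ∃ y₀, ⟪y₀, e⟫ = 0 ∧ ‖y - y₀‖ = |⟪y, e⟫| :=
  ⟨y - ⟪y, e⟫ • e, by simp [inner_sub_left, real_inner_smul_left, he],
    by simp [norm_smul, he]⟩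

theorem norm_reflection_sub_le {y z : E} (hy : ⟪y, e⟫ ≤ 0) (hz : 0 ≤ ⟪z, e⟫) :
    ‖ρ y - z‖ ≤ ‖y - z‖ := by
  have hsq : ‖ρ y - z‖ ^ 2 = ‖y - z‖ ^ 2 + 4 * ⟪y, e⟫ * ⟪z, e⟫ := by
    rw [reflection_orthogonal_singleton_apply, sub_right_comm, norm_sub_sq_real, norm_smul, he,
      mul_one, Real.norm_eq_abs, sq_abs, real_inner_smul_right, inner_sub_left, real_inner_comm y e]
    ring
  nlinarith [norm_nonneg (ρ y - z), norm_nonneg (y - z), mul_nonpos_of_nonpos_of_nonneg hy hz]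

variable {P Q : E → ℝ} {C α σ : ℝ} (hC : 0 ≤ C) (hα : 0 ≤ α)
  (hP : ∀ x ∈ upperHalfSpace e, ∀ y ∈ upperHalfSpace e,
    |P x - P y| ≤ C * ‖x - y‖ ^ α)
  (hσ : σ = 1 ∨ σ = -1 ∧ ∀ x, ⟪x, e⟫ = 0 → P x = 0)
  (hQ_upper : EqOn Q P (upperHalfSpace e))
  (hQ_lower : ∀ y, ⟪y, e⟫ < 0 → Q y = σ * P ((ℝ ∙ e)ᗮ.reflection y))
include hC hα hP hσ hQ_upper hQ_lower

theorem abs_sub_le_of_inner_neg_of_inner_nonneg {y z : E} (hy : ⟪y, e⟫ < 0)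
    (hz : 0 ≤ ⟪z, e⟫) : |Q y - Q z| ≤ 2 * C * ‖y - z‖ ^ α := by
  have mono {a : ℝ} (ha : a ≤ ‖y - z‖) (h0 : 0 ≤ a) : C * a ^ α ≤ C * ‖y - z‖ ^ α := by
    gcongr
  have double : C * ‖y - z‖ ^ α ≤ 2 * C * ‖y - z‖ ^ α := by
    nlinarith [Real.rpow_nonneg (norm_nonneg (y - z)) α]
  have hyz : ⟪z, e⟫ - ⟪y, e⟫ ≤ ‖y - z‖ := by
    simpa [he, norm_sub_rev, inner_sub_left] using real_inner_le_norm (z - y) e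
  have hρy := mapsTo_reflection_lowerHalfSpace (mem_lowerHalfSpace.2 hy.le)
  rw [hQ_lower y hy, hQ_upper hz]
  rcases hσ with rfl | ⟨rfl, hP0⟩
  · rw [one_mul]
    exact (hP _ hρy z hz).trans <|
      (mono (norm_reflection_sub_le he hy.le hz) (norm_nonneg _)).trans double
  obtain ⟨y₀, hy₀, hyy₀⟩ := exists_inner_eq_zero_norm_sub_eq he (ρ y)
  obtain ⟨z₀, hz₀, hzz₀⟩ := exists_inner_eq_zero_norm_sub_eq he z
  rw [inner_reflection_orthogonal_singleton, abs_neg, abs_of_neg hy] at hyy₀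
  rw [abs_of_nonneg hz] at hzz₀
  calc |-1 * P (ρ y) - P z| = |(P (ρ y) - P y₀) + (P z - P z₀)| := by
        rw [hP0 _ hy₀, hP0 _ hz₀, ← abs_neg]; ring_nf
    _ ≤ |P (ρ y) - P y₀| + |P z - P z₀| := abs_add_le _ _
    _ ≤ C * ‖ρ y - y₀‖ ^ α + C * ‖z - z₀‖ ^ α :=
        add_le_add (hP _ hρy _ (mem_upperHalfSpace.2 hy₀.ge))
          (hP _ hz _ (mem_upperHalfSpace.2 hz₀.ge))
    _ ≤ C * ‖y - z‖ ^ α + C * ‖y - z‖ ^ α :=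
        add_le_add (mono (by linarith) (norm_nonneg _)) (mono (by linarith) (norm_nonneg _))
    _ = 2 * C * ‖y - z‖ ^ α := by ring

theorem abs_sub_le_of_reflection (y z : E) : |Q y - Q z| ≤ 2 * C * ‖y - z‖ ^ α := by
  have double : C * ‖y - z‖ ^ α ≤ 2 * C * ‖y - z‖ ^ α := by
    nlinarith [Real.rpow_nonneg (norm_nonneg (y - z)) α]
  rcases lt_or_ge ⟪y, e⟫ 0 with hy | hy <;> rcases lt_or_ge ⟪z, e⟫ 0 with hz | hz
  · have hσ_abs : |σ| = 1 := by rcases hσ with rfl | ⟨rfl, -⟩ <;> simp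
    rw [hQ_lower y hy, hQ_lower z hz, ← mul_sub, abs_mul, hσ_abs, one_mul]
    refine (hP _ (mapsTo_reflection_lowerHalfSpace (mem_lowerHalfSpace.2 hy.le)) _
      (mapsTo_reflection_lowerHalfSpace (mem_lowerHalfSpace.2 hz.le))).trans ?_
    rwa [← map_sub, LinearIsometryEquiv.norm_map]
  · exact abs_sub_le_of_inner_neg_of_inner_nonneg he hC hα hP hσ hQ_upper hQ_lower hy hz
  · rw [abs_sub_comm, norm_sub_rev]
    exact abs_sub_le_of_inner_neg_of_inner_nonneg he hC hα hP hσ hQ_upper hQ_lower hz hy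
  · rw [hQ_upper hy, hQ_upper hz]
    exact (hP y hy z hz).trans double

end Holder

end Reflection

section EuclideanSpace

open EuclideanSpace

variable {n : ℕ}

theorem secondPartial_eq_fderiv_fderiv {g : EuclideanSpace ℝ (Fin n) → ℝ}
    {y : EuclideanSpace ℝ (Fin n)} (hg : DifferentiableAt ℝ (fderiv ℝ g) y) (i j : Fin n) :
    secondPartial g i j y = fderiv ℝ (fderiv ℝ g) y (single j 1) (single i 1) := by
  simp [secondPartial, fderiv_clm_apply hg (differentiableAt_const _)]

theorem secondPartialW_eq_fderivWithin_fderivWithin {g : EuclideanSpace ℝ (Fin n) → ℝ}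
    {s : Set (EuclideanSpace ℝ (Fin n))} {x : EuclideanSpace ℝ (Fin n)}
    (hg : DifferentiableWithinAt ℝ (fderivWithin ℝ g s) s x) (hs : UniqueDiffWithinAt ℝ s x)
    (i j : Fin n) :
    secondPartialW g s i j x =
      fderivWithin ℝ (fderivWithin ℝ g s) s x (single j 1) (single i 1) := by
  simp [secondPartialW, fderivWithin_clm_apply hs hg (differentiableWithinAt_const _)]

theorem inner_single_one_right (x : EuclideanSpace ℝ (Fin n)) (i : Fin n) :
    ⟪x, single i 1⟫ = x i := by
  simp [inner_single_right]

theorem halfSp_eq_upperHalfSpace (iN : Fin n) :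
    halfSp iN = upperHalfSpace (single iN (1 : ℝ)) := by
  ext x
  rw [mem_upperHalfSpace, inner_single_one_right]
  rfl

theorem negC_eq_reflection (iN : Fin n) (x : EuclideanSpace ℝ (Fin n)) :
    negC iN x = (ℝ ∙ single iN (1 : ℝ))ᗮ.reflection x := by
  ext j
  by_cases h : j = iN
  · simp [negC, reflection_orthogonal_singleton_apply, inner_single_left, h]
    ring
  · simp [negC, reflection_orthogonal_singleton_apply, inner_single_left, h]

theorem evenRefl_eq_reflectionExtension (iN : Fin n) (f : EuclideanSpace ℝ (Fin n) → ℝ) :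
    evenRefl iN f = reflectionExtension (single iN 1) (.id ℝ ℝ) f := by
  ext x
  simp [evenRefl, reflectionExtension, negC_eq_reflection, inner_single_one_right]

theorem reflection_single (iN i : Fin n) :
    (ℝ ∙ single iN (1 : ℝ))ᗮ.reflection (single i 1) =
      (if i = iN then -1 else 1 : ℝ) • single i 1 := by
  split_ifs with h
  · rw [h, Submodule.reflection_orthogonalComplement_singleton_eq_neg, neg_one_smul]
  · rw [one_smul, reflection_orthogonal_singleton_eq_self (by simp [inner_single_right, h])]

variable {iN : Fin n} {f : EuclideanSpace ℝ (Fin n) → ℝ} (hf : ContDiffOn ℝ 2 f (halfSp iN))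
  (hneu : ∀ x : EuclideanSpace ℝ (Fin n), x iN = 0 →
    fderivWithin ℝ f (halfSp iN) x (single iN 1) = 0)

local notation "𝓗" => upperHalfSpace (single iN (1 : ℝ))

include hneu in
theorem fderivWithin_upperHalfSpace_single_eq_zero (x : EuclideanSpace ℝ (Fin n))
    (hx : ⟪x, single iN 1⟫ = 0) : fderivWithin ℝ f 𝓗 x (single iN 1) = 0 := by
  rw [← halfSp_eq_upperHalfSpace]
  exact hneu x (by rwa [← inner_single_one_right])

include hf in
theorem secondPartialW_halfSp_eq {x : EuclideanSpace ℝ (Fin n)} (hx : x ∈ halfSp iN)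
    (i j : Fin n) :
    secondPartialW f (halfSp iN) i j x =
      fderivWithin ℝ (fderivWithin ℝ f 𝓗) 𝓗 x (single j 1) (single i 1) := by
  rw [halfSp_eq_upperHalfSpace] at hf hx ⊢
  exact secondPartialW_eq_fderivWithin_fderivWithin
    ((contDiffOn_fderivWithin_upperHalfSpace hf).differentiableOn one_ne_zero x hx)
    (uniqueDiffOn_upperHalfSpace _ x hx) i j

include hf hneu

theorem contDiff_evenRefl : ContDiff ℝ 2 (evenRefl iN f) := by
  rw [evenRefl_eq_reflectionExtension]
  exact contDiff_reflectionExtension_id (halfSp_eq_upperHalfSpace iN ▸ hf)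
    (fderivWithin_upperHalfSpace_single_eq_zero hneu)

theorem secondPartial_evenRefl (i j : Fin n) (y : EuclideanSpace ℝ (Fin n)) :
    secondPartial (evenRefl iN f) i j y =
      if 0 ≤ y iN then secondPartialW f (halfSp iN) i j y
      else (if i = iN then -1 else 1) * (if j = iN then -1 else 1) *
        secondPartialW f (halfSp iN) i j (negC iN y) := by
  have hf' := halfSp_eq_upperHalfSpace iN ▸ hf
  have hneu' := fderivWithin_upperHalfSpace_single_eq_zero hneu
  have hD : Differentiable ℝ (fderiv ℝ (reflectionExtension (single iN 1) (.id ℝ ℝ) f)) :=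
    ((contDiff_reflectionExtension_id hf' hneu').fderiv_right le_rfl).differentiable one_ne_zero
  rw [evenRefl_eq_reflectionExtension, secondPartial_eq_fderiv_fderiv (hD y),
    fderiv_fderiv_reflectionExtension_id hf' hneu', reflectionExtension, inner_single_one_right]
  by_cases hy : 0 ≤ y iN
  · simp only [hy, if_true]
    rw [secondPartialW_halfSp_eq hf hy]
  · simp only [hy, if_false]
    rw [secondPartialW_halfSp_eq hf (by simp [halfSp, negC]; linarith), negC_eq_reflection,
      reflectionLift_apply, reflectionLift_apply, reflection_single, reflection_single]
    simp only [map_smul, ContinuousLinearMap.id_apply, smul_apply, smul_eq_mul]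
    ring

theorem secondPartialW_eq_zero_of_mixed {i j : Fin n}
    (hij : i = iN ∧ j ≠ iN ∨ i ≠ iN ∧ j = iN) {x : EuclideanSpace ℝ (Fin n)} (hx : x iN = 0) :
    secondPartialW f (halfSp iN) i j x = 0 := by
  have hf' := halfSp_eq_upperHalfSpace iN ▸ hf
  have hneu' := fderivWithin_upperHalfSpace_single_eq_zero hneu
  rw [secondPartialW_halfSp_eq hf hx.ge]
  rw [← inner_single_one_right] at hx
  rcases hij with ⟨rfl, hj⟩ | ⟨hi, rfl⟩
  · exact fderivWithin_fderivWithin_apply_self_eq_zero hf' hneu' hx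
      (by simp [inner_single_right, hj])
  · exact fderivWithin_fderivWithin_self_apply_eq_zero hf' hneu' hx
      (by simp [inner_single_right, hi])

theorem abs_secondPartial_evenRefl_sub_le {C α : ℝ} (hC : 0 ≤ C) (hα : 0 ≤ α)
    (hP : ∀ i j : Fin n, ∀ x ∈ halfSp iN, ∀ y ∈ halfSp iN,
      |secondPartialW f (halfSp iN) i j x - secondPartialW f (halfSp iN) i j y| ≤
        C * ‖x - y‖ ^ α)
    (i j : Fin n) (y z : EuclideanSpace ℝ (Fin n)) :
    |secondPartial (evenRefl iN f) i j y - secondPartial (evenRefl iN f) i j z| ≤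
      2 * C * ‖y - z‖ ^ α := by
  have hmem {x : EuclideanSpace ℝ (Fin n)} (hx : x ∈ 𝓗) : x ∈ halfSp iN := by
    rwa [halfSp_eq_upperHalfSpace]
  refine abs_sub_le_of_reflection (by simp) hC hα
    (fun x hx y hy => hP i j x (hmem hx) y (hmem hy))
    (σ := (if i = iN then -1 else 1) * (if j = iN then -1 else 1)) ?_ (fun y hy => ?_)
    (fun y hy => ?_) y z
  · have hcoord {x : EuclideanSpace ℝ (Fin n)} (hx : ⟪x, single iN 1⟫ = 0) : x iN = 0 := by
      rwa [← inner_single_one_right]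
    by_cases hi : i = iN <;> by_cases hj : j = iN
    · exact .inl (by simp [hi, hj])
    · exact .inr ⟨by simp [hi, hj], fun x h =>
        secondPartialW_eq_zero_of_mixed hf hneu (.inl ⟨hi, hj⟩) (hcoord h)⟩
    · exact .inr ⟨by simp [hi, hj], fun x h =>
        secondPartialW_eq_zero_of_mixed hf hneu (.inr ⟨hi, hj⟩) (hcoord h)⟩
    · exact .inl (by simp [hi, hj])
  · rw [secondPartial_evenRefl hf hneu, if_pos (show 0 ≤ y iN from hmem hy)]
  · rw [inner_single_one_right] at hy
    rw [secondPartial_evenRefl hf hneu, if_neg hy.not_ge, negC_eq_reflection]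

end EuclideanSpace

/-- Even reflection of a `C²` function with vanishing normal derivative: if `f` is `C²` up to
the boundary on the closed half-space `H = {xₙ ≥ 0}` and `∂f/∂xₙ = 0` on `{xₙ = 0}`, then the
even reflection `f̃` of `f` is `C²` on all of `ℝⁿ`; moreover, if in addition the second-order
partial derivatives of `f` are `α`-Hölder on `H` (`0 < α < 1`), then the second-order partial
derivatives of `f̃` are locally `α`-Hölder on `ℝⁿ`. -/
theorem even_reflection_C2 (n : ℕ) (hn : 1 ≤ n) (f : EuclideanSpace ℝ (Fin n) → ℝ)
    (hf : ContDiffOn ℝ 2 f (halfSp (⟨n - 1, by omega⟩ : Fin n)))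
    (hneu : ∀ x : EuclideanSpace ℝ (Fin n), x (⟨n - 1, by omega⟩ : Fin n) = 0 →
      fderivWithin ℝ f (halfSp (⟨n - 1, by omega⟩ : Fin n)) x
        (EuclideanSpace.single (⟨n - 1, by omega⟩ : Fin n) 1) = 0) :
    ContDiff ℝ 2 (evenRefl (⟨n - 1, by omega⟩ : Fin n) f) ∧
    ∀ α : ℝ, 0 < α → α < 1 →
      (∃ C : ℝ, ∀ i j : Fin n, ∀ x ∈ halfSp (⟨n - 1, by omega⟩ : Fin n),
        ∀ y ∈ halfSp (⟨n - 1, by omega⟩ : Fin n),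
          |secondPartialW f (halfSp (⟨n - 1, by omega⟩ : Fin n)) i j x -
            secondPartialW f (halfSp (⟨n - 1, by omega⟩ : Fin n)) i j y| ≤ C * ‖x - y‖ ^ α) →
      ∀ i j : Fin n, ∀ x : EuclideanSpace ℝ (Fin n), ∃ ε > (0 : ℝ), ∃ C : ℝ,
        ∀ y ∈ Metric.ball x ε, ∀ z ∈ Metric.ball x ε,
          |secondPartial (evenRefl (⟨n - 1, by omega⟩ : Fin n) f) i j y -
            secondPartial (evenRefl (⟨n - 1, by omega⟩ : Fin n) f) i j z|
          ≤ C * ‖y - z‖ ^ α := by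
  refine ⟨contDiff_evenRefl hf hneu, fun α hα _ ⟨C, hC⟩ i j x => ?_⟩
  -- the estimate is global, so any radius will do
  refine ⟨1, one_pos, 2 * max C 0, fun y _ z _ => ?_⟩
  refine abs_secondPartial_evenRefl_sub_le hf hneu (le_max_right C 0) hα.le
    (fun i j x hx y hy => (hC i j x hx y hy).trans ?_) i j y z
  gcongr
  exact le_max_left C 0
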